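/- arXiv:1410.3209 — 4 statements merged into one kernel-verified Lean document; each statement's English description precedes it below -/
import Mathlib

section
/- Let N ≥ 2 and let T be an N×N complex special unitary matrix (T unitary with det T = 1). Suppose there exist unit vectors ψ₀, ψ₁ ∈ ℂᴺ with ⟨ψ₁, ψ₀⟩ = 0 such that: (i) T maps the line spanned by ψ₀ onto the line spanned by ψ₁ and vice versa, i.e. there are scalars c₀, c₁ ∈ ℂ with T ψ₀ = c₁ • ψ₁ and T ψ₁ = c₀ • ψ₀; and (ii) T ψ = ψ for every ψ ∈ ℂᴺ orthogonal to both ψ₀ and ψ₁. Then there exist a real number θ and a special unitary N×N matrix V such that T = V * (Ô(θ) ⊕ I_{N−2}) * V†, where Ô(θ) is the 2×2 matrix with zero diagonal and off-diagonal entries i·e^{−iθ} (top right) and i·e^{iθ} (bottom left), and Ô(θ) ⊕ I_{N−2} denotes the block diagonal matrix with blocks Ô(θ) and the (N−2)×(N−2) identity. -/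
/-!
Completing `ψ₀, ψ₁` to an orthonormal basis, `T` becomes the block sum of the antidiagonal
matrix `!![0, c₀; c₁, 0]` with the identity. Rescaling the first basis vector by the inverse of
the determinant of the change of basis makes that change special unitary and keeps the `2 × 2`
block antidiagonal. The block is then special unitary itself, so its entries satisfy `|b| = 1`
and `a b = -1`, which is exactly the shape of `Ô(θ)` with `e^{iθ} = -i b`.
-/

open Matrix Complex

/-- The 2×2 matrix `Ô(θ) = !![0, i·e^{−iθ}; i·e^{iθ}, 0]`. -/
noncomputable def Ohat (θ : ℝ) : Matrix (Fin 2) (Fin 2) ℂ :=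
  !![0, Complex.I * Complex.exp (-(Complex.I * (θ : ℂ)));
     Complex.I * Complex.exp (Complex.I * (θ : ℂ)), 0]

namespace Matrix

section

variable {𝕜 : Type*} [RCLike 𝕜] {n k m ι : Type*} [Fintype n]

theorem orthonormal_toLp_transpose_iff [DecidableEq ι] (W : Matrix n ι 𝕜) :
    Orthonormal 𝕜 (fun i ↦ WithLp.toLp 2 (Wᵀ i)) ↔ Wᴴ * W = 1 := by
  rw [← gram_eq_one_iff_orthonormal, gram_eq_conjTranspose_mul (EuclideanSpace.basisFun n 𝕜)]
  rfl

theorem exists_conjTranspose_mul_fromCols_eq_one [Fintype k] [DecidableEq k] [Fintype m]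
    [DecidableEq m] {W₁ : Matrix n k 𝕜} (hW₁ : W₁ᴴ * W₁ = 1) (e : k ⊕ m ≃ n) :
    ∃ W₂ : Matrix n m 𝕜, (fromCols W₁ W₂)ᴴ * fromCols W₁ W₂ = 1 := by
  let v : k ⊕ m → EuclideanSpace 𝕜 n := Sum.elim (fun a ↦ WithLp.toLp 2 (W₁ᵀ a)) 0
  have hv : Orthonormal 𝕜 ((Set.range Sum.inl).domRestrict v) := by
    have := ((orthonormal_toLp_transpose_iff W₁).2 hW₁).comp _
      (Equiv.ofInjective _ (Sum.inl_injective (β := m))).symm.injective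
    convert this using 1
    ext ⟨_, a, rfl⟩ : 1
    simp [v]
  obtain ⟨b, hb⟩ := hv.exists_orthonormalBasis_extension_of_card_eq (by simp [Fintype.card_congr e])
  refine ⟨of fun j c ↦ b (.inr c) j, (orthonormal_toLp_transpose_iff _).1 ?_⟩
  suffices h : (fun x ↦ WithLp.toLp 2 ((fromCols W₁ (of fun j c ↦ b (.inr c) j))ᵀ x)) = b by
    rw [h]; exact b.orthonormal
  ext (a | c) : 1
  · rw [hb (.inl a) (by simp)]
    rfl
  · rfl

end

theorem submatrix_mul_reindex_mul_conjTranspose {R n ι : Type*} [Semiring R] [StarRing R]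
    [Fintype n] [Fintype ι] (W : Matrix n ι R) (e : ι ≃ n) (X : Matrix ι ι R) :
    W.submatrix id e.symm * reindex e e X * (W.submatrix id e.symm)ᴴ = W * X * Wᴴ := by
  simp [reindex_apply, conjTranspose_submatrix]

section DirectSumOne

variable {R k m n : Type*} [DecidableEq m] (e : k ⊕ m ≃ n)

/-- The block sum `A ⊕ 1`, its indices identified with `n` through `e`. -/
def directSumOne [Zero R] [One R] (A : Matrix k k R) : Matrix n n R :=
  reindex e e (fromBlocks A 0 0 1)

theorem directSumOne_mul [Semiring R] [Fintype k] [Fintype m] [Fintype n] (A B : Matrix k k R) :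
    directSumOne e A * directSumOne e B = directSumOne e (A * B) := by
  simp [directSumOne, fromBlocks_multiply]

theorem conjTranspose_directSumOne [Semiring R] [StarRing R] (A : Matrix k k R) :
    (directSumOne e A)ᴴ = directSumOne e Aᴴ := by
  simp [directSumOne, fromBlocks_conjTranspose]

theorem directSumOne_one [DecidableEq k] [DecidableEq n] [Zero R] [One R] :
    directSumOne e (1 : Matrix k k R) = 1 := by
  simp [directSumOne]

theorem directSumOne_injective [Zero R] [One R] :
    Function.Injective (directSumOne e : Matrix k k R → Matrix n n R) := fun _ _ h ↦
  (fromBlocks_inj.1 ((reindex e e).injective h)).1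

variable [Fintype k] [DecidableEq k] [Fintype m] [Fintype n] [DecidableEq n]

theorem det_directSumOne [CommRing R] (A : Matrix k k R) : (directSumOne e A).det = A.det := by
  simp [directSumOne]

theorem directSumOne_mem_specialUnitaryGroup_iff [CommRing R] [StarRing R] (A : Matrix k k R) :
    directSumOne e A ∈ specialUnitaryGroup n R ↔ A ∈ specialUnitaryGroup k R := by
  simp only [mem_specialUnitaryGroup_iff, mem_unitaryGroup_iff, star_eq_conjTranspose,
    conjTranspose_directSumOne, directSumOne_mul, det_directSumOne, ← directSumOne_one e,
    (directSumOne_injective e).eq_iff]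

end DirectSumOne

theorem mem_specialUnitaryGroup_of_eq_conj {R n : Type*} [CommRing R] [StarRing R] [Fintype n]
    [DecidableEq n] {V T M : Matrix n n R} (hV : V ∈ specialUnitaryGroup n R)
    (hT : T ∈ specialUnitaryGroup n R) (h : T = V * M * Vᴴ) : M ∈ specialUnitaryGroup n R := by
  obtain ⟨hVu, hVdet⟩ := mem_specialUnitaryGroup_iff.1 hV
  have hVV : Vᴴ * V = 1 := Unitary.star_mul_self_of_mem hVu
  have hM : M = star V * T * V := by
    rw [h, star_eq_conjTranspose, ← Matrix.mul_assoc, ← Matrix.mul_assoc, hVV, Matrix.one_mul,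
      Matrix.mul_assoc, hVV, Matrix.mul_one]
  have hV' : star V ∈ specialUnitaryGroup n R := mem_specialUnitaryGroup_iff.2
    ⟨Unitary.star_mem hVu, by rw [star_eq_conjTranspose, det_conjTranspose, hVdet, star_one]⟩
  rw [hM]
  exact mul_mem (mul_mem hV' hT) hV

end Matrix

theorem exists_Ohat_eq_of_mem_specialUnitaryGroup {a b : ℂ}
    (h : !![0, a; b, 0] ∈ specialUnitaryGroup (Fin 2) ℂ) : ∃ θ : ℝ, Ohat θ = !![0, a; b, 0] := by
  obtain ⟨hu, hdet⟩ := mem_specialUnitaryGroup_iff.1 h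
  have hab : a * b = -1 := by
    rw [det_fin_two_of] at hdet
    linear_combination -hdet
  have hb : ‖b‖ = 1 := by
    have h11 : normSq b = 1 := by
      simpa [mul_apply, Fin.sum_univ_two, mul_conj] using
        congrFun (congrFun (mem_unitaryGroup_iff.1 hu) 1) 1
    rwa [normSq_eq_norm_sq, pow_eq_one_iff_of_nonneg (norm_nonneg b) two_ne_zero] at h11
  have hb₀ : b ≠ 0 := norm_ne_zero_iff.1 (by rw [hb]; exact one_ne_zero)
  obtain ⟨θ, hexp⟩ : ∃ θ : ℝ, exp (I * θ) = -(I * b) :=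
    ⟨arg (-(I * b)), by simpa [hb, mul_comm] using norm_mul_exp_arg_mul_I (-(I * b))⟩
  have h₁₀ : I * exp (I * θ) = b := by
    rw [hexp]
    linear_combination -b * I_sq
  have h₀₁ : I * exp (-(I * θ)) = a := by
    rw [Complex.exp_neg, hexp]
    field_simp
    linear_combination -hab
  exact ⟨θ, by rw [Ohat, h₀₁, h₁₀]⟩

theorem exists_unitaryGroup_conj_directSumOne_swap {m n : Type*} [Fintype m] [DecidableEq m]
    [Fintype n] [DecidableEq n] (e : Fin 2 ⊕ m ≃ n) {T : Matrix n n ℂ} {ψ₀ ψ₁ : n → ℂ}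
    {c₀ c₁ : ℂ} (hψ₀ : star ψ₀ ⬝ᵥ ψ₀ = 1) (hψ₁ : star ψ₁ ⬝ᵥ ψ₁ = 1)
    (horth : star ψ₁ ⬝ᵥ ψ₀ = 0) (h₀ : T *ᵥ ψ₀ = c₁ • ψ₁) (h₁ : T *ᵥ ψ₁ = c₀ • ψ₀)
    (hfix : ∀ ψ : n → ℂ, star ψ₀ ⬝ᵥ ψ = 0 → star ψ₁ ⬝ᵥ ψ = 0 → T *ᵥ ψ = ψ) :
    ∃ V ∈ unitaryGroup n ℂ, T = V * directSumOne e !![0, c₀; c₁, 0] * Vᴴ := by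
  let W₁ : Matrix n (Fin 2) ℂ := (of ![ψ₀, ψ₁])ᵀ
  have horth' : star ψ₀ ⬝ᵥ ψ₁ = 0 := by rw [star_dotProduct, horth, star_zero]
  have hW₁ : W₁ᴴ * W₁ = 1 := by
    ext i j
    fin_cases i <;> fin_cases j
    exacts [hψ₀, horth', horth, hψ₁]
  obtain ⟨W₂, hW⟩ := exists_conjTranspose_mul_fromCols_eq_one hW₁ e
  have hW' : fromCols W₁ W₂ * (fromCols W₁ W₂)ᴴ = 1 := (mul_eq_one_comm_of_equiv e).1 hW
  have hW₁₂ : W₁ᴴ * W₂ = 0 := by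
    rw [conjTranspose_fromCols_eq_fromRows_conjTranspose, fromRows_mul_fromCols,
      ← fromBlocks_one] at hW
    exact (fromBlocks_inj.1 hW).2.1
  have hT₁ : T * W₁ = W₁ * !![0, c₀; c₁, 0] := by
    ext j a
    fin_cases a
    · simpa [W₁, mul_apply, Fin.sum_univ_two, mulVec, dotProduct, mul_comm] using congrFun h₀ j
    · simpa [W₁, mul_apply, Fin.sum_univ_two, mulVec, dotProduct, mul_comm] using congrFun h₁ j
  have hT₂ : T * W₂ = W₂ := by
    ext j c
    have := hfix (W₂ᵀ c) (congrFun (congrFun hW₁₂ 0) c) (congrFun (congrFun hW₁₂ 1) c)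
    exact congrFun this j
  have hTW : T * fromCols W₁ W₂ =
      fromCols W₁ W₂ * (fromBlocks !![0, c₀; c₁, 0] 0 0 1 : Matrix (Fin 2 ⊕ m) (Fin 2 ⊕ m) ℂ) := by
    rw [mul_fromCols, fromCols_mul_fromBlocks, hT₁, hT₂]
    simp
  refine ⟨(fromCols W₁ W₂).submatrix id e.symm, ?_, ?_⟩
  · rw [mem_unitaryGroup_iff, star_eq_conjTranspose, conjTranspose_submatrix, submatrix_mul_equiv,
      hW', submatrix_id_id]
  · rw [directSumOne, submatrix_mul_reindex_mul_conjTranspose, ← hTW, Matrix.mul_assoc, hW',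
      Matrix.mul_one]

open scoped ComplexConjugate in
theorem exists_specialUnitaryGroup_conj_directSumOne_antidiag {m n : Type*} [Fintype m]
    [DecidableEq m] [Fintype n] [DecidableEq n] (e : Fin 2 ⊕ m ≃ n) {V₀ : Matrix n n ℂ}
    (hV₀ : V₀ ∈ unitaryGroup n ℂ) (a b : ℂ) :
    ∃ V ∈ specialUnitaryGroup n ℂ, ∃ a' b' : ℂ,
      V₀ * directSumOne e !![0, a; b, 0] * V₀ᴴ = V * directSumOne e !![0, a'; b', 0] * Vᴴ := by
  set d := V₀.det
  have hd : conj d * d = 1 := Unitary.star_mul_self_of_mem (det_of_mem_unitary hV₀)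
  -- rescaling the first column of `V₀` by `d⁻¹ = conj d` makes the determinant `1`
  let Δ : Matrix (Fin 2) (Fin 2) ℂ := !![conj d, 0; 0, 1]
  have hΔ : Δ * Δᴴ = 1 := by
    ext i j; fin_cases i <;> fin_cases j <;> simp [Δ, mul_apply, Fin.sum_univ_two, hd]
  have hda : conj d * (d * a) = a := by linear_combination a * hd
  have hdb : conj d * b * d = b := by linear_combination b * hd
  have hA : !![0, a; b, 0] = Δ * !![0, d * a; conj d * b, 0] * Δᴴ := by
    ext i j; fin_cases i <;> fin_cases j <;> simp [Δ, mul_apply, Fin.sum_univ_two, hda, hdb]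
  refine ⟨V₀ * directSumOne e Δ, ?_, d * a, conj d * b, ?_⟩
  · refine mem_specialUnitaryGroup_iff.2 ⟨mul_mem hV₀ ?_, ?_⟩
    · rw [mem_unitaryGroup_iff, star_eq_conjTranspose, conjTranspose_directSumOne,
        directSumOne_mul, hΔ, directSumOne_one]
    · simp only [det_mul, det_directSumOne, det_fin_two_of, Δ]
      linear_combination hd
  · rw [hA, ← directSumOne_mul, ← directSumOne_mul, ← conjTranspose_directSumOne,
      conjTranspose_mul]
    simp only [Matrix.mul_assoc]

/-- Theorem 2 of the paper: any special unitary `T` that swaps (up to phase) the lines of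
a pair of orthonormal vectors `ψ₀, ψ₁` and fixes every vector orthogonal to both has the
form `T = V (Ô(θ) ⊕ I_{N−2}) V†` for some real `θ` and some special unitary `V`. -/
theorem swap_gate_normal_form
    {N : ℕ} (hN : 2 ≤ N)
    (T : Matrix (Fin N) (Fin N) ℂ)
    (hTu : T * Tᴴ = 1) (hTdet : T.det = 1)
    (ψ₀ ψ₁ : Fin N → ℂ)
    (hψ₀ : star ψ₀ ⬝ᵥ ψ₀ = 1) (hψ₁ : star ψ₁ ⬝ᵥ ψ₁ = 1)
    (horth : star ψ₁ ⬝ᵥ ψ₀ = 0)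
    (hswap : ∃ c₀ c₁ : ℂ, T *ᵥ ψ₀ = c₁ • ψ₁ ∧ T *ᵥ ψ₁ = c₀ • ψ₀)
    (hfix : ∀ ψ : Fin N → ℂ, star ψ₀ ⬝ᵥ ψ = 0 → star ψ₁ ⬝ᵥ ψ = 0 → T *ᵥ ψ = ψ) :
    ∃ (θ : ℝ) (V : Matrix (Fin N) (Fin N) ℂ), V * Vᴴ = 1 ∧ V.det = 1 ∧
      T = V * (Matrix.reindex (finSumFinEquiv.trans (finCongr (Nat.add_sub_cancel' hN)))
                (finSumFinEquiv.trans (finCongr (Nat.add_sub_cancel' hN)))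
                (Matrix.fromBlocks (Ohat θ) 0 0 (1 : Matrix (Fin (N - 2)) (Fin (N - 2)) ℂ))) * Vᴴ := by
  obtain ⟨c₀, c₁, h₀, h₁⟩ := hswap
  let e := finSumFinEquiv.trans (finCongr (Nat.add_sub_cancel' hN))
  obtain ⟨V₀, hV₀, hT₀⟩ := exists_unitaryGroup_conj_directSumOne_swap e hψ₀ hψ₁ horth h₀ h₁ hfix
  obtain ⟨V, hV, a, b, hV₀V⟩ := exists_specialUnitaryGroup_conj_directSumOne_antidiag e hV₀ c₀ c₁
  rw [hV₀V] at hT₀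
  have hA : !![0, a; b, 0] ∈ specialUnitaryGroup (Fin 2) ℂ :=
    (directSumOne_mem_specialUnitaryGroup_iff e _).1 <| mem_specialUnitaryGroup_of_eq_conj hV
      (mem_specialUnitaryGroup_iff.2 ⟨mem_unitaryGroup_iff.2 hTu, hTdet⟩) hT₀
  obtain ⟨θ, hθ⟩ := exists_Ohat_eq_of_mem_specialUnitaryGroup hA
  obtain ⟨hVu, hVdet⟩ := mem_specialUnitaryGroup_iff.1 hV
  exact ⟨θ, V, mem_unitaryGroup_iff.1 hVu, hVdet, by rw [hT₀, ← hθ]; rfl⟩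
end

section
/- Let N ≥ 2 and θ ∈ ℝ. Let Ô(θ) = !![0, i·exp(−iθ); i·exp(iθ), 0] and consider the N×N block matrices Ô(θ) ⊕ 0_{N−2} (block diagonal with Ô(θ) and the zero (N−2)×(N−2) matrix) and Ô(θ) ⊕ I_{N−2} (block diagonal with Ô(θ) and the identity). Then exp((π/2) • (Ô(θ) ⊕ 0_{N−2})) = Ô(θ) ⊕ I_{N−2}; that is, (π/2)•(Ô(θ) ⊕ 0) is a logarithm of the N-level swap gate Ô(θ) ⊕ I. -/
/-!
`Ô(θ)² = -1`, so the `ℝ`-algebra map `ℂ → Matrix (Fin 2) (Fin 2) ℂ` sending `I` to `Ô(θ)` carries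
`exp (t * I) = cos t + sin t * I` to `exp (t • Ô(θ)) = cos t • 1 + sin t • Ô(θ)`, which is `Ô(θ)`
at `t = π/2`. The exponential commutes with block sums and with reindexing, both being continuous
ring homomorphisms, and `exp 0 = 1` on the second block.
-/

open Matrix Complex NormedSpace

theorem exp_real_smul_of_mul_self_eq_neg_one {A : Type*} [NormedRing A] [NormedAlgebra ℝ A]
    [Algebra ℚ A] {J : A} (hJ : J * J = -1) (t : ℝ) :
    exp (t • J) = Real.cos t • 1 + Real.sin t • J := by
  let f : ℂ →ₐ[ℝ] A := Complex.liftAux J hJ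
  have hf : Continuous f := f.toLinearMap.continuous_of_finiteDimensional
  have h := map_exp f hf (t * I)
  rw [← Complex.exp_eq_exp_ℂ, Complex.exp_mul_I, ← Complex.ofReal_cos, ← Complex.ofReal_sin] at h
  simpa [f, Algebra.algebraMap_eq_smul_one, Complex.cos_ofReal_re, Complex.sin_ofReal_re]
    using h.symm

namespace Matrix

variable {m n : Type*} [Fintype m] [DecidableEq m] [Fintype n] [DecidableEq n]

theorem exp_real_smul_of_mul_self_eq_neg_one {𝕜 : Type*} [RCLike 𝕜] {J : Matrix m m 𝕜}
    (hJ : J * J = -1) (t : ℝ) : exp (t • J) = Real.cos t • 1 + Real.sin t • J :=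
  open scoped Norms.Operator in _root_.exp_real_smul_of_mul_self_eq_neg_one hJ t

variable (m n) in
@[simps]
def fromBlocksRingHom (α : Type*) [Semiring α] :
    Matrix m m α × Matrix n n α →+* Matrix (m ⊕ n) (m ⊕ n) α where
  toFun p := fromBlocks p.1 0 0 p.2
  map_one' := fromBlocks_one
  map_mul' p q := by simp [fromBlocks_multiply]
  map_zero' := fromBlocks_zero
  map_add' p q := by simp [fromBlocks_add]

variable {𝔸 : Type*} [NormedRing 𝔸] [NormedAlgebra ℚ 𝔸] [CompleteSpace 𝔸]

-- The operator-norm uniformity is the product uniformity only up to unfolding, so completeness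
-- of the matrix algebras has to be supplied by hand.
theorem exp_reindex {l : Type*} [Fintype l] [DecidableEq l] (e : m ≃ l) (A : Matrix m m 𝔸) :
    exp (reindex e e A) = reindex e e (exp A) := by
  open scoped Norms.Operator in
  have : @CompleteSpace (Matrix m m 𝔸) PseudoMetricSpace.toUniformSpace :=
    inferInstanceAs (CompleteSpace (m → m → 𝔸))
  exact (map_exp (reindexRingEquiv 𝔸 e) (continuous_id.matrix_reindex e e) A).symm

theorem exp_fromBlocks_zero_zero (A : Matrix m m 𝔸) (B : Matrix n n 𝔸) :
    exp (fromBlocks A 0 0 B) = fromBlocks (exp A) 0 0 (exp B) := by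
  open scoped Norms.Operator in
  have : @CompleteSpace (Matrix m m 𝔸) PseudoMetricSpace.toUniformSpace :=
    inferInstanceAs (CompleteSpace (m → m → 𝔸))
  have : @CompleteSpace (Matrix n n 𝔸) PseudoMetricSpace.toUniformSpace :=
    inferInstanceAs (CompleteSpace (n → n → 𝔸))
  have h := map_exp (fromBlocksRingHom m n 𝔸)
    (continuous_fst.matrix_fromBlocks continuous_const continuous_const continuous_snd) (A, B)
  simp only [fromBlocksRingHom_apply, Prod.fst_exp, Prod.snd_exp] at h
  exact h.symm

end Matrix

theorem Ohat_mul_self (θ : ℝ) : Ohat θ * Ohat θ = -1 := by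
  ext i j
  fin_cases i <;> fin_cases j <;> simp [Ohat, mul_mul_mul_comm, ← Complex.exp_add]

theorem exp_pi_div_two_smul_Ohat (θ : ℝ) : exp ((Real.pi / 2 : ℝ) • Ohat θ) = Ohat θ := by
  simp [Matrix.exp_real_smul_of_mul_self_eq_neg_one (Ohat_mul_self θ)]

/-- `(π/2) • (Ô(θ) ⊕ 0_{N−2})` is a logarithm of the `N`-level swap gate
`Ô(θ) ⊕ I_{N−2}`: its matrix exponential equals `Ô(θ) ⊕ I_{N−2}`. -/
theorem exp_log_of_swap_gate {N : ℕ} (hN : 2 ≤ N) (θ : ℝ) :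
    exp ((Real.pi / 2 : ℝ) •
        (Matrix.reindex (finSumFinEquiv.trans (finCongr (Nat.add_sub_cancel' hN)))
          (finSumFinEquiv.trans (finCongr (Nat.add_sub_cancel' hN)))
          (Matrix.fromBlocks (Ohat θ) 0 0 (0 : Matrix (Fin (N - 2)) (Fin (N - 2)) ℂ))))
      = Matrix.reindex (finSumFinEquiv.trans (finCongr (Nat.add_sub_cancel' hN)))
          (finSumFinEquiv.trans (finCongr (Nat.add_sub_cancel' hN)))
          (Matrix.fromBlocks (Ohat θ) 0 0 (1 : Matrix (Fin (N - 2)) (Fin (N - 2)) ℂ)) := by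
  rw [← coe_reindexLinearEquiv ℝ ℂ, ← map_smul, coe_reindexLinearEquiv, fromBlocks_smul,
    smul_zero, smul_zero, smul_zero, exp_reindex, exp_fromBlocks_zero_zero,
    exp_pi_div_two_smul_Ohat, NormedSpace.exp_zero]
end

section
/- Let N ≥ 2, θ ∈ ℝ, let V be an N×N unitary complex matrix, and let p ≥ 1 be a natural number. Set L = (π/2) • (V * (Ô(θ) ⊕ 0_{N−2}) * V†) and K = i • L (a Hermitian matrix whose smallest eigenvalue is −π/2), and let ψ = V e₀ where e₀ is the first standard basis vector of ℂᴺ. Then (⟨ψ, (K + (π/2)•1)^p ψ⟩)^{1/p} = π / 2^{1/p}; that is, the value of the p-th central moment function G_p^{ψ} at the logarithm of the swap gate O_V = V(Ô(θ) ⊕ I)V† equals π/2^{1/p}. -/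
/-!
With `M = i • Ô(θ)` one has `M * M = 1`, hence `(M + 1) ^ (k + 1) = 2 ^ k • (M + 1)`.
Since `K + (π/2) • 1 = (π/2) • V ((M + 1) ⊕ 1) V†` and `ψ = V e₀`, the moment
`⟨ψ, (K + (π/2) • 1) ^ p ψ⟩` is `(π/2) ^ p` times the `(0, 0)` entry of `(M + 1) ^ p`,
namely `(π/2) ^ p * 2 ^ (p - 1) = π ^ p / 2`.
-/

open Matrix Complex

lemma add_one_pow_succ_of_mul_self_eq_one {R : Type*} [Semiring R] {a : R} (ha : a * a = 1)
    (n : ℕ) : (a + 1) ^ (n + 1) = 2 ^ n • (a + 1) := by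
  induction n with
  | zero => simp
  | succ n ih =>
    have hsq : (a + 1) * (a + 1) = 2 • (a + 1) := by
      rw [add_mul, mul_add, ha, two_nsmul]; noncomm_ring
    rw [pow_succ, ih, smul_mul_assoc, hsq, smul_smul, pow_succ]

lemma I_smul_Ohat_mul_self (θ : ℝ) : (I • Ohat θ) * (I • Ohat θ) = 1 := by
  ext i j
  fin_cases i <;> fin_cases j <;>
    simp [Ohat, Matrix.mul_apply] <;> ring_nf <;> simp [← Complex.exp_add]

section
variable {n : Type*} [Fintype n] [DecidableEq n] {𝕜 : Type*} [CommSemiring 𝕜] [StarRing 𝕜]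

lemma conj_pow_of_mul_conjTranspose_eq_one {V : Matrix n n 𝕜} (hV : V * Vᴴ = 1)
    (X : Matrix n n 𝕜) (k : ℕ) : (V * X * Vᴴ) ^ k = V * X ^ k * Vᴴ := by
  induction k with
  | zero => rw [pow_zero, pow_zero, Matrix.mul_one, hV]
  | succ k ih =>
    rw [pow_succ, ih, pow_succ]
    simp only [Matrix.mul_assoc, ← Matrix.mul_assoc Vᴴ V, mul_eq_one_comm.mp hV, Matrix.one_mul]

lemma star_mulVec_dotProduct_conj_mulVec {V : Matrix n n 𝕜} (hV : Vᴴ * V = 1)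
    (Y : Matrix n n 𝕜) (v w : n → 𝕜) :
    star (V *ᵥ v) ⬝ᵥ ((V * Y * Vᴴ) *ᵥ (V *ᵥ w)) = star v ⬝ᵥ (Y *ᵥ w) := by
  rw [star_mulVec, mulVec_mulVec, dotProduct_mulVec, vecMul_vecMul, ← dotProduct_mulVec]
  simp only [Matrix.mul_assoc, hV, mul_one]
  rw [← Matrix.mul_assoc, hV, Matrix.one_mul]

lemma star_single_dotProduct_mulVec_single (Y : Matrix n n 𝕜) (i j : n) :
    star (Pi.single i 1 : n → 𝕜) ⬝ᵥ (Y *ᵥ Pi.single j 1) = Y i j := by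
  simp [Pi.star_single]
end

section
variable {m n ι R : Type*} [Fintype m] [Fintype n] [Fintype ι] [DecidableEq m] [DecidableEq n]
  [DecidableEq ι] [CommSemiring R]

lemma smul_reindex_fromBlocks_zero_add_one (e : m ⊕ n ≃ ι) (c : R) (A : Matrix m m R) :
    c • reindex e e (fromBlocks A 0 0 0) + 1 = reindex e e (fromBlocks (c • A + 1) 0 0 1) := by
  have h : fromBlocks (c • A + 1) 0 0 (1 : Matrix n n R) = c • fromBlocks A 0 0 0 + 1 := by
    rw [← fromBlocks_one, fromBlocks_smul, fromBlocks_add]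
    simp only [smul_zero, add_zero, zero_add]
  rw [h, ← coe_reindexAlgEquiv R R, map_add, map_smul, map_one]

lemma reindex_fromBlocks_one_pow (e : m ⊕ n ≃ ι) (A : Matrix m m R) (k : ℕ) :
    reindex e e (fromBlocks A 0 0 1) ^ k = reindex e e (fromBlocks (A ^ k) 0 0 1) := by
  rw [← coe_reindexAlgEquiv R R, ← map_pow, fromBlocks_diagonal_pow, one_pow]
end

lemma I_smul_smul_conj_add_smul_one {n : Type*} [Fintype n] [DecidableEq n]
    {V : Matrix n n ℂ} (hV : V * Vᴴ = 1) (c : ℝ) (X : Matrix n n ℂ) :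
    I • c • (V * X * Vᴴ) + c • 1 = c • (V * (I • X + 1) * Vᴴ) := by
  rw [Matrix.mul_add, Matrix.add_mul, Matrix.mul_one, hV, Matrix.mul_smul, Matrix.smul_mul,
    smul_add, smul_comm]

lemma div_two_pow_succ_mul_two_pow_rpow_one_div {x : ℝ} (hx : 0 ≤ x) (n : ℕ) :
    ((x / 2) ^ (n + 1) * 2 ^ n) ^ (1 / ((n + 1 : ℕ) : ℝ)) = x / 2 ^ (1 / ((n + 1 : ℕ) : ℝ)) := by
  have h : (x / 2) ^ (n + 1) * 2 ^ n = x ^ (n + 1) / 2 := by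
    rw [div_pow, pow_succ 2]; field_simp
  rw [h, Real.div_rpow (by positivity) (by norm_num), one_div, Real.pow_rpow_inv_natCast hx (by omega)]

/-- The value of the `p`-th central moment function `G_p^{ψ}` at the logarithm
`L = (π/2) • V (Ô(θ) ⊕ 0) V†` of the swap gate `O_V = V (Ô(θ) ⊕ I) V†`, in the state
`ψ = V e₀`, equals `π / 2^{1/p}`: writing `K = i • L` (a Hermitian matrix with smallest
eigenvalue `−π/2`), we have `(⟨ψ, (K + (π/2)•1)^p ψ⟩)^{1/p} = π / 2^{1/p}`. -/
theorem centralMoment_of_swap_gate_log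
    {N : ℕ} (hN : 2 ≤ N) (θ : ℝ) (V : Matrix (Fin N) (Fin N) ℂ) (hV : V * Vᴴ = 1)
    (p : ℕ) (hp : 1 ≤ p)
    (L K : Matrix (Fin N) (Fin N) ℂ) (ψ : Fin N → ℂ)
    (hL : L = (Real.pi / 2 : ℝ) •
        (V * (Matrix.reindex (finSumFinEquiv.trans (finCongr (Nat.add_sub_cancel' hN)))
                (finSumFinEquiv.trans (finCongr (Nat.add_sub_cancel' hN)))
                (Matrix.fromBlocks (Ohat θ) 0 0 (0 : Matrix (Fin (N - 2)) (Fin (N - 2)) ℂ))) * Vᴴ))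
    (hK : K = Complex.I • L)
    (hψ : ψ = V *ᵥ Pi.single (⟨0, by omega⟩ : Fin N) 1) :
    ((star ψ ⬝ᵥ ((K + (Real.pi / 2 : ℝ) • (1 : Matrix (Fin N) (Fin N) ℂ)) ^ p *ᵥ ψ)).re) ^ (1 / (p : ℝ))
      = Real.pi / (2 : ℝ) ^ (1 / (p : ℝ)) := by
  obtain ⟨n, rfl⟩ : ∃ n, p = n + 1 := ⟨p - 1, by omega⟩
  set e := finSumFinEquiv.trans (finCongr (Nat.add_sub_cancel' hN))
  have he : (⟨0, by omega⟩ : Fin N) = e (Sum.inl 0) := rfl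
  have hshift : K + (Real.pi / 2 : ℝ) • 1 =
      (Real.pi / 2 : ℝ) • (V * reindex e e (fromBlocks (I • Ohat θ + 1) 0 0 1) * Vᴴ) := by
    rw [hK, hL, I_smul_smul_conj_add_smul_one hV, smul_reindex_fromBlocks_zero_add_one]
  have hcorner : ((I • Ohat θ + 1) ^ (n + 1)) 0 0 = 2 ^ n := by
    rw [add_one_pow_succ_of_mul_self_eq_one (I_smul_Ohat_mul_self θ)]
    simp [Ohat]
  have hmoment : star ψ ⬝ᵥ ((K + (Real.pi / 2 : ℝ) • 1) ^ (n + 1) *ᵥ ψ) =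
      (((Real.pi / 2) ^ (n + 1) * 2 ^ n : ℝ) : ℂ) := by
    rw [hshift, smul_pow, conj_pow_of_mul_conjTranspose_eq_one hV, smul_mulVec, dotProduct_smul, hψ,
      star_mulVec_dotProduct_conj_mulVec (mul_eq_one_comm.mp hV),
      star_single_dotProduct_mulVec_single, reindex_fromBlocks_one_pow, he]
    simpa using hcorner
  rw [hmoment, ofReal_re, div_two_pow_succ_mul_two_pow_rpow_one_div Real.pi_pos.le]
end

section
/- (Margolus–Levitin bound for two-level systems.) Let H be a 2×2 Hermitian complex matrix with smallest eigenvalue E₀, let ψ ∈ ℂ² be a unit vector, and let t > 0 be a real number such that ⟨ψ, exp(−i t • H) ψ⟩ = 0 (the evolved state is orthogonal to the initial state). Then t · (⟨ψ, H ψ⟩ − E₀) ≥ π/2, where ⟨ψ, H ψ⟩ is the (real) energy expectation of the state ψ; equivalently, the orthogonalization time satisfies t ≥ π / (2(Ē − E₀)) with Ē = ⟨ψ, H ψ⟩. -/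
/-!
Diagonalise `H = U diag(E) U*` and put `pᵢ = |(U* ψ)ᵢ|²`. Then `p₀ + p₁ = 1`, the energy is
`p₀ E₀ + p₁ E₁`, and the survival amplitude `⟨ψ, exp(-itH) ψ⟩` is `p₀ e^{-itE₀} + p₁ e^{-itE₁}`.
A combination of two unit complex numbers with nonnegative weights vanishes only when the weights
are equal and the phases opposite; so `p₀ = p₁ = 1/2` and `t |E₀ - E₁| ≥ π`, while the energy
exceeds the ground level by at least `|E₀ - E₁| / 2`.
-/

open Matrix Complex NormedSpace
open scoped Real

theorem eq_of_smul_add_smul_eq_zero {E : Type*} [SeminormedAddCommGroup E] [NormedSpace ℝ E]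
    {a b : ℝ} {u v : E} (ha : 0 ≤ a) (hb : 0 ≤ b) (hu : ‖u‖ = 1) (hv : ‖v‖ = 1)
    (h : a • u + b • v = 0) : a = b := by
  have := congrArg norm (eq_neg_of_add_eq_zero_left h)
  rwa [norm_neg, norm_smul, norm_smul, hu, hv, mul_one, mul_one, Real.norm_of_nonneg ha,
    Real.norm_of_nonneg hb] at this

theorem Complex.pi_le_abs_sub_of_exp_add_exp_eq_zero {x y : ℝ}
    (h : Complex.exp (x * I) + Complex.exp (y * I) = 0) : π ≤ |x - y| := by
  have hexp : Complex.exp ((x - y : ℝ) * I) = -1 := by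
    rw [ofReal_sub, sub_mul, Complex.exp_sub, eq_neg_of_add_eq_zero_left h, neg_div,
      div_self (Complex.exp_ne_zero _)]
  have hcos : Real.cos (x - y) = -1 := by
    rw [← exp_ofReal_mul_I_re, hexp, neg_re, one_re]
  obtain ⟨k, hk⟩ := Real.cos_eq_neg_one_iff.mp hcos
  have hodd : (1 : ℝ) ≤ |((2 * k + 1 : ℤ) : ℝ)| := by
    exact_mod_cast Int.one_le_abs (by omega)
  calc π ≤ |((2 * k + 1 : ℤ) : ℝ)| * π := le_mul_of_one_le_left Real.pi_pos.le hodd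
    _ = |x - y| := by
      rw [← hk, ← abs_of_pos Real.pi_pos, ← abs_mul, abs_of_pos Real.pi_pos]
      push_cast; ring_nf

theorem margolus_levitin_two_point {p₀ p₁ E₀ E₁ m t : ℝ} (hp₀ : 0 ≤ p₀) (hp₁ : 0 ≤ p₁)
    (hp : p₀ + p₁ = 1) (ht : 0 < t) (hm₀ : m ≤ E₀) (hm₁ : m ≤ E₁)
    (horth : (p₀ : ℂ) * Complex.exp (-I * t * E₀) + (p₁ : ℂ) * Complex.exp (-I * t * E₁) = 0) :
    π / 2 ≤ t * (p₀ * E₀ + p₁ * E₁ - m) := by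
  have hphase : ∀ E : ℝ, -I * t * E = ((-(t * E) : ℝ) : ℂ) * I := fun E => by push_cast; ring
  simp only [hphase, ← real_smul] at horth
  have hp₀₁ : p₀ = p₁ := eq_of_smul_add_smul_eq_zero hp₀ hp₁ (norm_exp_ofReal_mul_I _)
    (norm_exp_ofReal_mul_I _) horth
  have hpi : π ≤ t * |E₀ - E₁| := by
    have := Complex.pi_le_abs_sub_of_exp_add_exp_eq_zero (x := -(t * E₀)) (y := -(t * E₁)) <| by
      rw [← hp₀₁, ← smul_add] at horth
      exact (smul_eq_zero.mp horth).resolve_left (by linarith)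
    rwa [show -(t * E₀) - -(t * E₁) = t * (E₁ - E₀) by ring, abs_mul, abs_of_pos ht,
      abs_sub_comm] at this
  have hgap : |E₀ - E₁| ≤ E₀ + E₁ - 2 * m := abs_sub_le_iff.2 ⟨by linarith, by linarith⟩
  have hhalf : p₀ = 1 / 2 := by linarith
  subst hp₀₁ hhalf
  linarith [mul_le_mul_of_nonneg_left hgap ht.le]

theorem Matrix.star_dotProduct_conj_diagonal_mulVec {n : Type*} [Fintype n] [DecidableEq n]
    (U : Matrix n n ℂ) (w : n → ℂ) (ψ : n → ℂ) :
    star ψ ⬝ᵥ ((U * diagonal w * star U) *ᵥ ψ) =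
      ∑ i, (normSq ((star U *ᵥ ψ) i) : ℂ) * w i := by
  set c := star U *ᵥ ψ
  have hc : star ψ ᵥ* U = star c := by
    rw [star_mulVec, star_eq_conjTranspose, conjTranspose_conjTranspose]
  rw [← mulVec_mulVec, ← mulVec_mulVec, dotProduct_mulVec, hc]
  refine Finset.sum_congr rfl fun i _ => ?_
  rw [mulVec_diagonal, normSq_eq_conj_mul_self, Pi.star_apply, star_def]
  ring

namespace Matrix.IsHermitian

variable {n : Type*} [Fintype n] [DecidableEq n] {A : Matrix n n ℂ} (hA : A.IsHermitian)

noncomputable def spectralWeight (ψ : n → ℂ) (i : n) : ℝ :=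
  normSq ((star (hA.eigenvectorUnitary : Matrix n n ℂ) *ᵥ ψ) i)

theorem spectralWeight_nonneg (ψ : n → ℂ) (i : n) : 0 ≤ hA.spectralWeight ψ i :=
  normSq_nonneg _

theorem exp_smul (s : ℂ) :
    NormedSpace.exp (s • A) = hA.eigenvectorUnitary *
      diagonal (fun i => Complex.exp (s * hA.eigenvalues i)) *
        star (hA.eigenvectorUnitary : Matrix n n ℂ) := by
  set U : Matrix n n ℂ := ↑hA.eigenvectorUnitary
  have hU : IsUnit U := (Unitary.toUnits hA.eigenvectorUnitary).isUnit
  have hinv : U⁻¹ = star U := inv_eq_left_inv (Unitary.coe_star_mul_self _)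
  have hsmul : s • A = U * diagonal (fun i => s * hA.eigenvalues i) * U⁻¹ := by
    conv_lhs => rw [hA.spectral_theorem]
    rw [hinv, Unitary.conjStarAlgAut_apply, ← smul_mul_assoc, ← mul_smul_comm, ← diagonal_smul]
    rfl
  rw [hsmul, exp_conj U _ hU, exp_diagonal, Pi.exp_def, hinv]
  simp only [← Complex.exp_eq_exp_ℂ]

theorem star_dotProduct_exp_smul_mulVec (s : ℂ) (ψ : n → ℂ) :
    star ψ ⬝ᵥ (NormedSpace.exp (s • A) *ᵥ ψ) =
      ∑ i, (hA.spectralWeight ψ i : ℂ) * Complex.exp (s * hA.eigenvalues i) := by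
  rw [hA.exp_smul, star_dotProduct_conj_diagonal_mulVec]
  rfl

theorem re_star_dotProduct_mulVec (ψ : n → ℂ) :
    (star ψ ⬝ᵥ (A *ᵥ ψ)).re = ∑ i, hA.spectralWeight ψ i * hA.eigenvalues i := by
  conv_lhs => rw [hA.spectral_theorem, Unitary.conjStarAlgAut_apply,
    star_dotProduct_conj_diagonal_mulVec]
  simp [spectralWeight]

theorem sum_spectralWeight (ψ : n → ℂ) :
    ∑ i, (hA.spectralWeight ψ i : ℂ) = star ψ ⬝ᵥ ψ := by
  have h := hA.star_dotProduct_exp_smul_mulVec 0 ψ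
  simpa using h.symm

end Matrix.IsHermitian

/-- The Margolus–Levitin bound for two-level systems: if a unit state `ψ` of a
two-level system with Hermitian Hamiltonian `H` (smallest eigenvalue `E₀`) evolves
to an orthogonal state at time `t > 0`, then `t·(Ē − E₀) ≥ π/2`, where
`Ē = ⟨ψ, H ψ⟩` is the energy expectation. -/
theorem margolus_levitin_two_level
    (H : Matrix (Fin 2) (Fin 2) ℂ) (hH : H.IsHermitian)
    (ψ : Fin 2 → ℂ) (hψ : star ψ ⬝ᵥ ψ = 1)
    (t : ℝ) (ht : 0 < t)
    (horth : star ψ ⬝ᵥ (NormedSpace.exp (((-Complex.I) * (t : ℂ)) • H) *ᵥ ψ) = 0) :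
    t * ((star ψ ⬝ᵥ (H *ᵥ ψ)).re - ⨅ i, hH.eigenvalues i) ≥ Real.pi / 2 := by
  have hsum : hH.spectralWeight ψ 0 + hH.spectralWeight ψ 1 = 1 := by
    have h := hH.sum_spectralWeight ψ
    rw [Fin.sum_univ_two, hψ] at h
    exact_mod_cast h
  rw [hH.star_dotProduct_exp_smul_mulVec, Fin.sum_univ_two] at horth
  rw [hH.re_star_dotProduct_mulVec, Fin.sum_univ_two, ge_iff_le]
  exact margolus_levitin_two_point (hH.spectralWeight_nonneg ψ 0) (hH.spectralWeight_nonneg ψ 1)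
    hsum ht (ciInf_le (Finite.bddBelow_range _) 0) (ciInf_le (Finite.bddBelow_range _) 1) horth
end
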